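/- arXiv:1611.10259 — 8 statements merged into one kernel-verified Lean document; each statement's English description precedes it below -/
import Mathlib

section
/- Let (X,Y,E,F) be a bitournament with X and Y finite sets, and suppose it has no directed cycle. Then there exists an injective map f from the disjoint union X ⊎ Y into the natural numbers such that f(x) is even for every x ∈ X, f(y) is odd for every y ∈ Y, and for all x ∈ X and y ∈ Y: E x y holds if and only if f(x) < f(y), and F y x holds if and only if f(y) < f(x). (That is, every finite acyclic bitournament is isomorphic to the digraph D_S on some finite set S of natural numbers with an arc from a to b exactly when b > a and a, b have opposite parity.) -/
/-!
Orient the bitournament as a single relation on `X ⊕ Y`. Every closed walk in it alternates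
between `X` and `Y`, so acyclicity makes its transitive closure a strict order on the finite set
`X ⊕ Y`. A linear extension of that order ranks the vertices injectively by `g : X ⊕ Y → ℕ`
with arcs going upwards; the labels `2 g(x)` on `X` and `2 g(y) + 1` on `Y` then have the
required parities. Since every pair `(x, y)` carries exactly one of the two arcs, "arcs point
upwards" upgrades to the two equivalences.
-/

open Relation

section StrictOrderEmbedding

variable {α : Type*} [Finite α]

theorem exists_injective_strictMono_nat [PartialOrder α] :
    ∃ g : α → ℕ, Function.Injective g ∧ StrictMono g := by
  have : Finite (LinearExtension α) := ‹Finite α›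
  obtain ⟨e⟩ := nonempty_orderEmbedding_of_finite_infinite (LinearExtension α) ℕ
  have hinj : Function.Injective (toLinearExtension : α → LinearExtension α) := fun _ _ h => h
  exact ⟨e ∘ toLinearExtension, e.injective.comp hinj,
    e.strictMono.comp (toLinearExtension.monotone.strictMono_of_injective hinj)⟩

theorem exists_injective_nat_of_isStrictOrder (r : α → α → Prop) [IsStrictOrder α r] :
    ∃ g : α → ℕ, Function.Injective g ∧ ∀ a b, r a b → g a < g b := by
  let := partialOrderOfSO r
  obtain ⟨g, hinj, hmono⟩ := exists_injective_strictMono_nat (α := α)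
  exact ⟨g, hinj, fun _ _ h => hmono h⟩

end StrictOrderEmbedding

namespace Relation.TransGen

variable {α : Type*} {r : α → α → Prop}

theorem exists_nat_path {a b : α} (h : TransGen r a b) :
    ∃ n, ∃ x : ℕ → α, x 0 = a ∧ x (n + 1) = b ∧ ∀ i ≤ n, r (x i) (x (i + 1)) := by
  induction h using TransGen.head_induction_on with
  | @single a hab =>
    exact ⟨0, fun | 0 => a | _ + 1 => b, rfl, rfl, fun i hi => by
      obtain rfl := Nat.le_zero.mp hi; exact hab⟩
  | @head a c hac _ ih =>
    obtain ⟨n, x, hx0, hxn, hstep⟩ := ih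
    refine ⟨n + 1, fun | 0 => a | i + 1 => x i, rfl, hxn, fun i hi => ?_⟩
    cases i with
    | zero => simpa [hx0] using hac
    | succ i => exact hstep i (by omega)

theorem exists_fin_cycle {a : α} (h : TransGen r a a) :
    ∃ k, ∃ x : Fin (k + 1) → α, ∀ i, r (x i) (x (i + 1)) := by
  obtain ⟨n, x, hx0, hxn, hstep⟩ := h.exists_nat_path
  refine ⟨n, fun i => x i, fun i => ?_⟩
  change r (x i) (x ↑(i + 1))
  rw [Fin.val_add_one]
  split_ifs with hi
  · subst hi
    simpa [hx0, ← hxn] using hstep n le_rfl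
  · exact hstep i (Fin.is_le i)

end Relation.TransGen

theorem iff_lt_and_iff_lt_of_xor {β : Type*} [Preorder β] {P Q : Prop} {a b : β}
    (hPQ : Xor P Q) (hP : P → a < b) (hQ : Q → b < a) : (P ↔ a < b) ∧ (Q ↔ b < a) :=
  ⟨⟨hP, fun hab => hPQ.or.resolve_right fun hq => (hQ hq).not_gt hab⟩,
    ⟨hQ, fun hba => hPQ.or.resolve_left fun hp => (hP hp).not_gt hba⟩⟩

namespace Bitournament

variable {X Y : Type*} (E : X → Y → Prop) (F : Y → X → Prop)

def arc : X ⊕ Y → X ⊕ Y → Prop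
  | .inl x, .inr y => E x y
  | .inr y, .inl x => F y x
  | _, _ => False

def twoArc (x x' : X) : Prop := ∃ y, E x y ∧ F y x'

def reachableFrom (x : X) : X ⊕ Y → Prop
  | .inl x' => TransGen (twoArc E F) x x'
  | .inr y => ∃ x', ReflTransGen (twoArc E F) x x' ∧ E x' y

variable {E F}

theorem reachableFrom_of_transGen {x : X} {b : X ⊕ Y} (h : TransGen (arc E F) (.inl x) b) :
    reachableFrom E F x b := by
  induction h with
  | @single b hxb =>
    cases b with
    | inl => nomatch hxb
    | inr y => exact ⟨x, .refl, hxb⟩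
  | @tail b c _ hbc ih =>
    rcases b with x' | y <;> rcases c with x'' | y'
    · nomatch hbc
    · exact ⟨x', ih.to_reflTransGen, hbc⟩
    · obtain ⟨x₀, hxx₀, hE⟩ := ih
      exact TransGen.tail' hxx₀ ⟨y, hE, hbc⟩
    · nomatch hbc

theorem irrefl_transGen_arc (hacyc : ∀ x, ¬ TransGen (twoArc E F) x x) (a : X ⊕ Y) :
    ¬ TransGen (arc E F) a a := by
  intro haa
  cases a with
  | inl x => exact hacyc x (reachableFrom_of_transGen haa)
  | inr y =>
    -- rotate the cycle so that it starts at the vertex of `X` preceding `y`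
    obtain ⟨b, hyb, hby⟩ := TransGen.tail'_iff.mp haa
    cases b with
    | inr => nomatch hby
    | inl x => exact hacyc x (reachableFrom_of_transGen (TransGen.head' hby hyb))

theorem not_transGen_twoArc_self
    (hac : ∀ (k : ℕ) (x : Fin (k + 1) → X) (y : Fin (k + 1) → Y),
      ¬ ((∀ i, E (x i) (y i)) ∧ (∀ i, F (y i) (x (i + 1)))))
    (x : X) : ¬ TransGen (twoArc E F) x x := fun hxx => by
  obtain ⟨k, xs, hcycle⟩ := hxx.exists_fin_cycle
  choose ys hE hF using hcycle
  exact hac k xs ys ⟨hE, hF⟩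

end Bitournament

open Bitournament in
/-- Every finite acyclic bitournament is isomorphic to `D_S` for some finite
set `S ⊆ ℕ`: there is an injection `f : X ⊕ Y → ℕ`, even on `X` and odd on `Y`, such that
arcs correspond exactly to the order relation between labels. -/
theorem stmt_2 {X Y : Type*} [Fintype X] [Fintype Y]
    (E : X → Y → Prop) (F : Y → X → Prop)
    (hbt : ∀ (x : X) (y : Y), Xor' (E x y) (F y x))
    (hac : ∀ (k : ℕ) (x : Fin (k + 1) → X) (y : Fin (k + 1) → Y),
      ¬ ((∀ i, E (x i) (y i)) ∧ (∀ i, F (y i) (x (i + 1))))) :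
    ∃ f : X ⊕ Y → ℕ, Function.Injective f ∧
      (∀ x : X, Even (f (Sum.inl x))) ∧ (∀ y : Y, Odd (f (Sum.inr y))) ∧
      ∀ (x : X) (y : Y),
        (E x y ↔ f (Sum.inl x) < f (Sum.inr y)) ∧
        (F y x ↔ f (Sum.inr y) < f (Sum.inl x)) := by
  have : IsStrictOrder (X ⊕ Y) (TransGen (arc E F)) :=
    { irrefl := irrefl_transGen_arc (not_transGen_twoArc_self hac)
      trans := fun _ _ _ => TransGen.trans }
  obtain ⟨g, hinj, hmono⟩ := exists_injective_nat_of_isStrictOrder (TransGen (arc E F))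
  have harc : ∀ a b, arc E F a b → g a < g b := fun a b h => hmono a b (.single h)
  refine ⟨Sum.elim (fun x => 2 * g (.inl x)) (fun y => 2 * g (.inr y) + 1), ?_,
    fun x => even_two_mul _, fun y => odd_two_mul_add_one _, fun x y => ?_⟩
  · rintro (x | y) (x' | y') h <;> simp only [Sum.elim_inl, Sum.elim_inr] at h
    all_goals first | omega | exact hinj (by omega)
  · have hE : E x y → 2 * g (.inl x) < 2 * g (.inr y) + 1 := fun h => by
      have := harc (.inl x) (.inr y) h; omega
    have hF : F y x → 2 * g (.inr y) + 1 < 2 * g (.inl x) := fun h => by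
      have := harc (.inr y) (.inl x) h; omega
    exact iff_lt_and_iff_lt_of_xor (hbt x y) hE hF
end

section
/- Let G be a finite simple bipartite graph. Then there exist an injective map f : V(G) → ℕ taking only even values and a set O of positive odd integers such that for all distinct vertices u and v of G, u and v are adjacent in G if and only if both (f(u)+f(v))/2 and |f(u)−f(v)|/2 belong to O. (That is, every finite bipartite graph is isomorphic to an odd-even graph.) -/
private lemma key16 {i j : ℕ} (h : i < j) : 3 * 16 ^ i + 6 < 16 ^ j := by
  have h1 : (1:ℕ) ≤ 16 ^ i := Nat.one_le_pow _ _ (by norm_num)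
  have h2 : 16 ^ (i+1) ≤ 16 ^ j := Nat.pow_le_pow_right (by norm_num) h
  have h3 : 16 ^ (i+1) = 16 * 16 ^ i := by ring
  omega

private lemma lemA' {i j p q e1 e2 : ℕ} (hij : i < j) (hpq : p < q)
    (he1 : e1 ≤ 4) (he2 : e2 ≤ 4)
    (h : 16^i + 16^j + e1 = 16^p + 16^q + e2) : i = p ∧ j = q := by
  have pi : (1:ℕ) ≤ 16^i := Nat.one_le_pow _ _ (by norm_num)
  have pj : (1:ℕ) ≤ 16^j := Nat.one_le_pow _ _ (by norm_num)
  have pp : (1:ℕ) ≤ 16^p := Nat.one_le_pow _ _ (by norm_num)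
  have pq : (1:ℕ) ≤ 16^q := Nat.one_le_pow _ _ (by norm_num)
  have hjq : j = q := by
    rcases lt_trichotomy j q with h1 | h1 | h1
    · have k1 := key16 h1
      have k2 : (16:ℕ)^i ≤ 16^j := Nat.pow_le_pow_right (by norm_num) hij.le
      omega
    · exact h1
    · have k1 := key16 h1
      have k2 : (16:ℕ)^p ≤ 16^q := Nat.pow_le_pow_right (by norm_num) hpq.le
      omega
  subst hjq
  refine ⟨?_, rfl⟩
  rcases lt_trichotomy i p with h1 | h1 | h1
  · have k1 := key16 h1; omega
  · exact h1
  · have k1 := key16 h1; omega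

private lemma lemA {i j p q e1 e2 e3 e4 : ℕ} (hij : i ≠ j) (hpq : p ≠ q)
    (h1 : e1 ≤ 2) (h2 : e2 ≤ 2) (h3 : e3 ≤ 2) (h4 : e4 ≤ 2)
    (h : 16^i + e1 + (16^j + e2) = 16^p + e3 + (16^q + e4)) :
    (i = p ∧ j = q) ∨ (i = q ∧ j = p) := by
  rcases hij.lt_or_gt with hij' | hij' <;> rcases hpq.lt_or_gt with hpq' | hpq'
  · have := lemA' hij' hpq' (show e1 + e2 ≤ 4 by omega) (show e3 + e4 ≤ 4 by omega)
      (by omega)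
    exact Or.inl ⟨this.1, this.2⟩
  · have := lemA' hij' hpq' (show e1 + e2 ≤ 4 by omega) (show e4 + e3 ≤ 4 by omega)
      (by omega)
    exact Or.inr ⟨this.1, this.2⟩
  · have := lemA' hij' hpq' (show e2 + e1 ≤ 4 by omega) (show e3 + e4 ≤ 4 by omega)
      (by omega)
    exact Or.inr ⟨this.2, this.1⟩
  · have := lemA' hij' hpq' (show e2 + e1 ≤ 4 by omega) (show e4 + e3 ≤ 4 by omega)
      (by omega)
    exact Or.inl ⟨this.2, this.1⟩

private lemma lemB {i j p q e1 e2 e3 : ℕ} (hi : 1 ≤ i) (hq : 1 ≤ q)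
    (hij : i < j) (hqp : q < p) (he1 : e1 ≤ 4) (he2 : e2 ≤ 2) (he3 : e3 ≤ 2) :
    16^i + 16^j + e1 + (16^q + e2) ≠ 16^p + e3 := by
  have pi : (1:ℕ) ≤ 16^i := Nat.one_le_pow _ _ (by norm_num)
  have pj : (1:ℕ) ≤ 16^j := Nat.one_le_pow _ _ (by norm_num)
  have pp : (1:ℕ) ≤ 16^p := Nat.one_le_pow _ _ (by norm_num)
  have pq : (1:ℕ) ≤ 16^q := Nat.one_le_pow _ _ (by norm_num)
  rcases le_or_gt p j with h | h
  · have h1 : (16:ℕ)^p ≤ 16^j := Nat.pow_le_pow_right (by norm_num) h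
    have h2 : (16:ℕ) ≤ 16^i := by
      calc (16:ℕ) = 16^1 := by norm_num
      _ ≤ 16^i := Nat.pow_le_pow_right (by norm_num) hi
    have h3 : (16:ℕ) ≤ 16^q := by
      calc (16:ℕ) = 16^1 := by norm_num
      _ ≤ 16^q := Nat.pow_le_pow_right (by norm_num) hq
    omega
  · have h1 : (16:ℕ)^j ≤ 16^(p-1) := Nat.pow_le_pow_right (by norm_num) (by omega)
    have h2 : (16:ℕ)^i ≤ 16^(p-1) := Nat.pow_le_pow_right (by norm_num) (by omega)
    have h3 : (16:ℕ)^q ≤ 16^(p-1) := Nat.pow_le_pow_right (by norm_num) (by omega)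
    have h4 : 3 * 16^(p-1) + 6 < 16^p := key16 (by omega)
    omega

private lemma lemB2 {i j p q e1 e2 e3 e4 : ℕ} (hi : 1 ≤ i) (hj : 1 ≤ j) (hq : 1 ≤ q)
    (hij : i ≠ j) (hqp : q < p)
    (h1 : e1 ≤ 2) (h2 : e2 ≤ 2) (h3 : e3 ≤ 2) (h4 : e4 ≤ 2) :
    16^i + e1 + (16^j + e2) + (16^q + e3) ≠ 16^p + e4 := by
  intro hc
  rcases hij.lt_or_gt with h | h
  · exact lemB hi hq h hqp (show e1 + e2 ≤ 4 by omega) h3 h4 (by omega)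
  · exact lemB hj hq h hqp (show e2 + e1 ≤ 4 by omega) h3 h4 (by omega)

/-- Every finite simple bipartite graph is isomorphic to an odd-even graph:
there are an injective even-valued labelling `f : V → ℕ` and a set `O` of positive odd
integers such that distinct `u, v` are adjacent iff both `(f u + f v)/2` and
`|f u - f v|/2` belong to `O`. -/
theorem stmt_5 {V : Type*} [Fintype V] (G : SimpleGraph V)
    (hbip : ∃ s : Set V, ∀ u v : V, G.Adj u v → (u ∈ s ↔ v ∉ s)) :
    ∃ f : V → ℕ, Function.Injective f ∧ (∀ v, Even (f v)) ∧
      ∃ O : Set ℕ, (∀ o ∈ O, Odd o ∧ 0 < o) ∧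
        ∀ u v : V, u ≠ v →
          (G.Adj u v ↔
            (f u + f v) / 2 ∈ O ∧ (max (f u) (f v) - min (f u) (f v)) / 2 ∈ O) := by
  classical
  obtain ⟨s, hs⟩ := hbip
  set I : V → ℕ := fun v => (Fintype.equivFin V v : ℕ) + 1 with hIdef
  have hIinj : Function.Injective I := by
    intro u v h
    have h' : (Fintype.equivFin V u : ℕ) = (Fintype.equivFin V v : ℕ) := by
      simpa [hIdef] using h
    exact (Fintype.equivFin V).injective (Fin.val_injective h')
  have hI1 : ∀ v, 1 ≤ I v := fun v => Nat.le_add_left 1 _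
  set e : V → ℕ := fun v => if v ∈ s then 0 else 2 with hedef
  have he : ∀ v, e v = 0 ∨ e v = 2 := by
    intro v; simp only [hedef]; split <;> simp
  have he2 : ∀ v, e v ≤ 2 := by intro v; rcases he v with h | h <;> omega
  set f : V → ℕ := fun v => 16 ^ (I v) + e v with hfdef
  have hfeq : ∀ v, f v = 16 ^ (I v) + e v := fun v => rfl
  have hcross : ∀ u v, G.Adj u v → (e u = 0 ∧ e v = 2) ∨ (e u = 2 ∧ e v = 0) := by
    intro u v huv
    have h1 := hs u v huv
    by_cases hu : u ∈ s
    · have hv : v ∉ s := h1.mp hu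
      left; simp [hedef, hu, hv]
    · have hv : v ∈ s := by
        by_contra hv
        exact hu (h1.mpr hv)
      right; simp [hedef, hu, hv]
  have hmono : ∀ u v, I u < I v → f u < f v := by
    intro u v h
    have k1 := key16 h
    have p1 : (1:ℕ) ≤ 16 ^ (I u) := Nat.one_le_pow _ _ (by norm_num)
    have p2 : (1:ℕ) ≤ 16 ^ (I v) := Nat.one_le_pow _ _ (by norm_num)
    rcases he u with h1 | h1 <;> rcases he v with h2 | h2 <;>
      rw [hfeq u, hfeq v, h1, h2] <;> omega
  have hfinj : Function.Injective f := by
    intro u v h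
    rcases lt_trichotomy (I u) (I v) with h1 | h1 | h1
    · exact absurd h (hmono u v h1).ne
    · exact hIinj h1
    · exact absurd h.symm (hmono v u h1).ne
  have hIne : ∀ u v : V, u ≠ v → I u ≠ I v := fun u v h hI => h (hIinj hI)
  have hf16 : ∀ v, ∃ c, f v = 16 * c + e v ∧ 1 ≤ c := by
    intro v
    have hd : (16:ℕ) ∣ 16 ^ (I v) := dvd_pow_self 16 (by have := hI1 v; omega)
    obtain ⟨c, hc⟩ := hd
    have h1 : (1:ℕ) ≤ 16 ^ (I v) := Nat.one_le_pow _ _ (by norm_num)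
    exact ⟨c, by rw [hfeq v, hc], by omega⟩
  have hfeven : ∀ v, Even (f v) := by
    intro v
    obtain ⟨c, hc, -⟩ := hf16 v
    rcases he v with h1 | h1 <;> rw [Nat.even_iff] <;> omega
  refine ⟨f, hfinj, hfeven,
    {n | ∃ a b, G.Adj a b ∧ (n = (f a + f b) / 2 ∨
      n = (max (f a) (f b) - min (f a) (f b)) / 2)}, ?_, ?_⟩
  · -- all elements odd and positive
    rintro o ⟨a, b, hab, ho⟩
    obtain ⟨c1, hc1, hc1'⟩ := hf16 a
    obtain ⟨c2, hc2, hc2'⟩ := hf16 b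
    have hne : f a ≠ f b := fun h => hab.ne (hfinj h)
    rcases hcross a b hab with ⟨h1, h2⟩ | ⟨h1, h2⟩ <;>
      rcases le_total (f a) (f b) with hle | hle <;>
      [rw [max_eq_right hle, min_eq_left hle] at ho;
       rw [max_eq_left hle, min_eq_right hle] at ho;
       rw [max_eq_right hle, min_eq_left hle] at ho;
       rw [max_eq_left hle, min_eq_right hle] at ho] <;>
      (constructor
       · rw [Nat.odd_iff]; rcases ho with ho | ho <;> omega
       · rcases ho with ho | ho <;> omega)
  · -- the characterization
    intro u v huv
    constructor
    · intro h
      exact ⟨⟨u, v, h, Or.inl rfl⟩, ⟨u, v, h, Or.inr rfl⟩⟩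
    · rintro ⟨⟨a, b, hab, hsum⟩, -⟩
      obtain ⟨cu, hcu, hcu'⟩ := hf16 u
      obtain ⟨cv, hcv, hcv'⟩ := hf16 v
      obtain ⟨ca, hca, hca'⟩ := hf16 a
      obtain ⟨cb, hcb, hcb'⟩ := hf16 b
      have heu := he u; have hev := he v; have hea := he a; have heb := he b
      rcases hsum with hsum | hsum
      · -- sum = sum case: pairs coincide
        have heq : f u + f v = f a + f b := by
          rcases heu with h1 | h1 <;> rcases hev with h2 | h2 <;>
            rcases hea with h3 | h3 <;> rcases heb with h4 | h4 <;> omega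
        have heq' : 16 ^ (I u) + e u + (16 ^ (I v) + e v)
            = 16 ^ (I a) + e a + (16 ^ (I b) + e b) := by
          rw [← hfeq u, ← hfeq v, ← hfeq a, ← hfeq b]; omega
        have hres := lemA (hIne u v huv) (hIne a b hab.ne)
          (he2 u) (he2 v) (he2 a) (he2 b) heq'
        rcases hres with ⟨h1, h2⟩ | ⟨h1, h2⟩
        · rw [hIinj h1, hIinj h2]; exact hab
        · rw [hIinj h1, hIinj h2]; exact hab.symm
      · -- sum = difference: impossible
        exfalso
        rcases (hIne a b hab.ne).lt_or_gt with hIab | hIab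
        · have hlt := hmono a b hIab
          rw [max_eq_right hlt.le, min_eq_left hlt.le] at hsum
          have heq : f u + f v + f a = f b := by
            rcases heu with h1 | h1 <;> rcases hev with h2 | h2 <;>
              rcases hea with h3 | h3 <;> rcases heb with h4 | h4 <;> omega
          refine lemB2 (hI1 u) (hI1 v) (hI1 a) (hIne u v huv) hIab
            (he2 u) (he2 v) (he2 a) (he2 b) ?_
          rw [← hfeq u, ← hfeq v, ← hfeq a, ← hfeq b]; omega
        · have hlt := hmono b a hIab
          rw [max_eq_left hlt.le, min_eq_right hlt.le] at hsum
          have heq : f u + f v + f b = f a := by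
            rcases heu with h1 | h1 <;> rcases hev with h2 | h2 <;>
              rcases hea with h3 | h3 <;> rcases heb with h4 | h4 <;> omega
          refine lemB2 (hI1 u) (hI1 v) (hI1 b) (hIne u v huv) hIab
            (he2 u) (he2 v) (he2 b) (he2 a) ?_
          rw [← hfeq u, ← hfeq v, ← hfeq b, ← hfeq a]; omega
end

section
/- Let a be a positive even integer and b a positive odd integer, and let O_{a,b} = { a·k + b : k a positive integer }. Consider the oriented odd-even graph whose vertex set is the set of all nonnegative even integers, with an arc from u to v if and only if both (u+v)/2 and (v−u)/2 belong to O_{a,b}. Let V₁ = { v even : v ≡ 0 (mod 4) } and V₂ = { v even : v ≡ 2 (mod 4) }. Then this graph is unidirectional — i.e., either every arc has its tail in V₁ and head in V₂, or every arc has its tail in V₂ and head in V₁ — if and only if 4 divides a. -/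
/-- The arithmetic-progression odd set `O_{a,b} = {a·k + b : k ≥ 1}`. -/
def Oab (a b : ℕ) : Set ℕ := {n : ℕ | ∃ k : ℕ, 1 ≤ k ∧ n = a * k + b}

/-- The arc relation of the oriented odd-even graph with odd set `O`: there is an arc
from `u` to `v` iff both `(u+v)/2` and `(v-u)/2` belong to `O`, i.e. iff there are
`p, q ∈ O` with `u + v = 2p` and `v - u = 2q`. -/
def arcO (O : Set ℕ) (u v : ℕ) : Prop :=
  ∃ p ∈ O, ∃ q ∈ O, u + v = 2 * p ∧ u + 2 * q = v

/-- For `a` a positive even integer and `b` a positive odd integer, the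
oriented odd-even graph `𝒢_ℰ(O_{a,b})` on all nonnegative even integers is
unidirectional (all arcs go from `V₁ = {v ≡ 0 (mod 4)}` to `V₂ = {v ≡ 2 (mod 4)}`, or
all arcs go from `V₂` to `V₁`) iff `4 ∣ a`. -/
theorem stmt_8 (a b : ℕ) (ha : Even a) (ha0 : 0 < a) (hb : Odd b) (hb0 : 0 < b) :
    ((∀ u v : ℕ, Even u → Even v → arcO (Oab a b) u v → u % 4 = 0 ∧ v % 4 = 2) ∨
     (∀ u v : ℕ, Even u → Even v → arcO (Oab a b) u v → u % 4 = 2 ∧ v % 4 = 0)) ↔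
    4 ∣ a := by
  obtain ⟨t, ht⟩ := ha
  obtain ⟨n, hn⟩ := hb
  constructor
  · rintro (h | h)
    · -- use arc from a to 3a+2b
      have harc : arcO (Oab a b) a (3 * a + 2 * b) := by
        refine ⟨2 * a + b, ⟨2, by omega, by ring⟩, a + b, ⟨1, le_refl 1, by ring⟩, by ring, by ring⟩
      have := h a (3 * a + 2 * b) ⟨t, ht⟩ ⟨a + t + b, by omega⟩ harc
      omega
    · -- use arc from 0 to 2a+2b
      have harc : arcO (Oab a b) 0 (2 * a + 2 * b) := by
        refine ⟨a + b, ⟨1, le_refl 1, by ring⟩, a + b, ⟨1, le_refl 1, by ring⟩, by ring, by ring⟩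
      have := h 0 (2 * a + 2 * b) ⟨0, rfl⟩ ⟨a + b, by ring⟩ harc
      omega
  · rintro ⟨m, hm⟩
    left
    rintro u v _ _ ⟨p, ⟨k₁, hk₁, rfl⟩, q, ⟨k₂, hk₂, rfl⟩, h1, h2⟩
    subst hm
    have e1 : 4 * m * k₁ = 4 * (m * k₁) := by ring
    have e2 : 4 * m * k₂ = 4 * (m * k₂) := by ring
    rw [e1] at h1
    rw [e2] at h2
    omega
end

section
/- The following are equivalent: (i) every even integer greater than 5 can be written as the sum of two odd primes (Goldbach's conjecture); (ii) for every integer n ≥ 7, the graph 𝒢_n is connected. -/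
/-- The finite Goldbach graph `𝒢_n`: vertex set is the even numbers `{0, 2, …, 2n}`,
with distinct `a, b` adjacent iff both `(a+b)/2` and `|a-b|/2` are odd primes. -/
def goldbachGraph (n : ℕ) : SimpleGraph {u : ℕ // Even u ∧ u ≤ 2 * n} where
  Adj a b := (a : ℕ) ≠ (b : ℕ) ∧
    (((a : ℕ) + (b : ℕ)) / 2).Prime ∧ Odd (((a : ℕ) + (b : ℕ)) / 2) ∧
    ((max (a : ℕ) (b : ℕ) - min (a : ℕ) (b : ℕ)) / 2).Prime ∧
    Odd ((max (a : ℕ) (b : ℕ) - min (a : ℕ) (b : ℕ)) / 2)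
  symm := by
    constructor
    rintro a b ⟨h1, h2, h3, h4, h5⟩
    refine ⟨h1.symm, ?_, ?_, ?_, ?_⟩ <;>
      simpa [Nat.add_comm, max_comm, min_comm] using (by assumption)
  loopless := by constructor; rintro a ⟨h1, -⟩; exact h1 rfl

/-!
An edge `a > b` of `𝒢_n` is exactly a decomposition `a = p + q` into odd primes, with
`b = p - q`. So under Goldbach every vertex `a ≥ 6` has a smaller neighbour, and descending
reaches `0`, `2` or `4`, which are joined to `0` through `8, 10, 14` once `n ≥ 7`.
Conversely the top vertex `2n` has a neighbour in a connected `𝒢_n`, necessarily smaller,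
which writes `2n` as a sum of two odd primes.
-/

def IsSumOfTwoOddPrimes (m : ℕ) : Prop :=
  ∃ p q : ℕ, p.Prime ∧ Odd p ∧ q.Prime ∧ Odd q ∧ m = p + q

def GoldbachConjecture : Prop :=
  ∀ m : ℕ, Even m → 5 < m → IsSumOfTwoOddPrimes m

namespace goldbachGraph

variable {n : ℕ}

def zero (n : ℕ) : {u : ℕ // Even u ∧ u ≤ 2 * n} := ⟨0, Even.zero, Nat.zero_le _⟩

def top (n : ℕ) : {u : ℕ // Even u ∧ u ≤ 2 * n} := ⟨2 * n, even_two_mul n, le_rfl⟩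

lemma adj_iff_of_lt {a b : {u : ℕ // Even u ∧ u ≤ 2 * n}} (h : (b : ℕ) < a) :
    (goldbachGraph n).Adj a b ↔
      ((a + b : ℕ) / 2).Prime ∧ Odd ((a + b : ℕ) / 2) ∧
        ((a - b : ℕ) / 2).Prime ∧ Odd ((a - b : ℕ) / 2) := by
  simp only [goldbachGraph, max_eq_left h.le, min_eq_right h.le, ne_eq, h.ne', not_false_eq_true,
    true_and]

lemma adj_of_eq_add_of_add_eq {a b : {u : ℕ // Even u ∧ u ≤ 2 * n}} {p q : ℕ}
    (hp : p.Prime) (hp_odd : Odd p) (hq : q.Prime) (hq_odd : Odd q)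
    (ha : (a : ℕ) = p + q) (hb : (b : ℕ) + q = p) : (goldbachGraph n).Adj a b := by
  have := hq.pos
  rw [adj_iff_of_lt (by omega)]
  rw [show ((a + b : ℕ) / 2) = p by omega, show ((a - b : ℕ) / 2) = q by omega]
  exact ⟨hp, hp_odd, hq, hq_odd⟩

lemma isSumOfTwoOddPrimes_of_adj {a b : {u : ℕ // Even u ∧ u ≤ 2 * n}} (h : (b : ℕ) < a)
    (hab : (goldbachGraph n).Adj a b) : IsSumOfTwoOddPrimes a := by
  obtain ⟨hp, hp_odd, hq, hq_odd⟩ := (adj_iff_of_lt h).1 hab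
  obtain ⟨⟨i, hi⟩, -⟩ := a.2
  obtain ⟨⟨j, hj⟩, -⟩ := b.2
  exact ⟨_, _, hp, hp_odd, hq, hq_odd, by omega⟩

lemma exists_adj_lt_of_isSumOfTwoOddPrimes {a : {u : ℕ // Even u ∧ u ≤ 2 * n}}
    (ha : IsSumOfTwoOddPrimes a) : ∃ b, b < a ∧ (goldbachGraph n).Adj a b := by
  obtain ⟨p, q, hp, hp_odd, hq, hq_odd, hpq⟩ := ha
  wlog hqp : q ≤ p generalizing p q
  · exact this q p hq hq_odd hp hp_odd (by omega) (by omega)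
  have := hq.pos
  refine ⟨⟨p - q, Nat.Odd.sub_odd hp_odd hq_odd, by omega⟩, ?_, ?_⟩
  · show p - q < (a : ℕ)
    omega
  · exact adj_of_eq_add_of_add_eq hp hp_odd hq hq_odd hpq (by simp only; omega)

lemma reachable_zero_of_le_four (hn : 7 ≤ n) {a : {u : ℕ // Even u ∧ u ≤ 2 * n}}
    (ha : (a : ℕ) ≤ 4) : (goldbachGraph n).Reachable a (zero n) := by
  have edge (a b : ℕ) (ha : Even a ∧ a ≤ 2 * n) (hb : Even b ∧ b ≤ 2 * n) (p q : ℕ)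
      (h : p.Prime ∧ Odd p ∧ q.Prime ∧ Odd q ∧ a = p + q ∧ b + q = p) :
      (goldbachGraph n).Reachable ⟨a, ha⟩ ⟨b, hb⟩ :=
    let ⟨hp, hp_odd, hq, hq_odd, hpq, hb⟩ := h
    (adj_of_eq_add_of_add_eq hp hp_odd hq hq_odd hpq hb).reachable
  have v8 : Even 8 ∧ 8 ≤ 2 * n := ⟨by decide, by omega⟩
  have v10 : Even 10 ∧ 10 ≤ 2 * n := ⟨by decide, by omega⟩
  have v14 : Even 14 ∧ 14 ≤ 2 * n := ⟨by decide, by omega⟩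
  obtain ⟨a, ⟨k, rfl⟩, hle⟩ := a
  dsimp only at ha
  obtain rfl | rfl | rfl : k = 0 ∨ k = 1 ∨ k = 2 := by omega
  · rfl
  · exact (edge 8 2 _ _ 5 3 (by norm_num)).symm.trans <|
      (edge 14 8 v14 v8 11 3 (by norm_num)).symm.trans (edge 14 0 v14 _ 7 7 (by norm_num))
  · exact (edge 10 4 v10 _ 7 3 (by norm_num)).symm.trans (edge 10 0 v10 _ 5 5 (by norm_num))

lemma reachable_zero (hn : 7 ≤ n) (goldbach : GoldbachConjecture)
    (a : {u : ℕ // Even u ∧ u ≤ 2 * n}) : (goldbachGraph n).Reachable a (zero n) := by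
  induction a using WellFoundedLT.induction with
  | _ a ih =>
    by_cases ha : (a : ℕ) ≤ 4
    · exact reachable_zero_of_le_four hn ha
    obtain ⟨b, hba, hab⟩ :=
      exists_adj_lt_of_isSumOfTwoOddPrimes (goldbach a a.2.1 (by obtain ⟨k, hk⟩ := a.2.1; omega))
    exact hab.reachable.trans (ih b hba)

lemma connected (hn : 7 ≤ n) (goldbach : GoldbachConjecture) :
    (goldbachGraph n).Connected :=
  have := Nonempty.intro (zero n)
  ⟨fun a b ↦ (reachable_zero hn goldbach a).trans (reachable_zero hn goldbach b).symm⟩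

lemma isSumOfTwoOddPrimes_two_mul (hn : 0 < n) (h : (goldbachGraph n).Connected) :
    IsSumOfTwoOddPrimes (2 * n) := by
  have : Nontrivial {u : ℕ // Even u ∧ u ≤ 2 * n} :=
    nontrivial_of_ne (top n) (zero n) (by simp [top, zero]; omega)
  obtain ⟨b, hb⟩ := h.preconnected.exists_adj_of_nontrivial (top n)
  have : (b : ℕ) ≠ 2 * n := hb.1.symm
  exact isSumOfTwoOddPrimes_of_adj (by have := b.2.2; simp only [top]; omega) hb

end goldbachGraph

/-- Goldbach's conjecture (every even integer `> 5` is the sum of two odd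
primes) holds iff the Goldbach graph `𝒢_n` is connected for every `n ≥ 7`. -/
theorem stmt_9 :
    (∀ m : ℕ, Even m → 5 < m →
      ∃ p q : ℕ, p.Prime ∧ Odd p ∧ q.Prime ∧ Odd q ∧ m = p + q) ↔
    (∀ n : ℕ, 7 ≤ n → (goldbachGraph n).Connected) := by
  refine ⟨fun goldbach n hn ↦ goldbachGraph.connected hn goldbach, fun h m hm h5 ↦ ?_⟩
  obtain ⟨k, rfl⟩ := hm
  rw [← two_mul]
  by_cases hk : 7 ≤ k
  · exact goldbachGraph.isSumOfTwoOddPrimes_two_mul (by omega) (h k hk)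
  obtain rfl | rfl | rfl | rfl : k = 3 ∨ k = 4 ∨ k = 5 ∨ k = 6 := by omega
  exacts [⟨3, 3, by norm_num⟩, ⟨3, 5, by norm_num⟩, ⟨3, 7, by norm_num⟩, ⟨5, 7, by norm_num⟩]
end

section
/- Let a and b be distinct nonnegative even integers, neither of which is divisible by 6, and suppose a and b are adjacent in 𝒢_∞, i.e., both (a+b)/2 and |a−b|/2 are odd primes. Then |a − b| = 6. -/
lemma stmt_15_aux (a b : ℕ) (ha : Even a) (hb : Even b) (hlt : a < b)
    (h6a : ¬ 6 ∣ a) (h6b : ¬ 6 ∣ b)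
    (hp : ((a + b) / 2).Prime) (hp' : Odd ((a + b) / 2))
    (hq : ((b - a) / 2).Prime) (hq' : Odd ((b - a) / 2)) : b - a = 6 := by
  obtain ⟨x, hx⟩ := ha
  obtain ⟨y, hy⟩ := hb
  set p := (a + b) / 2 with hpdef
  set q := (b - a) / 2 with hqdef
  have h2p : 2 * p = a + b := by omega
  have h2q : 2 * q = b - a := by omega
  have hp2 := hp.two_le
  have hq2 := hq.two_le
  have hpo : p % 2 = 1 := Nat.odd_iff.mp hp'
  have hqo : q % 2 = 1 := Nat.odd_iff.mp hq'
  by_cases hq3 : q = 3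
  · omega
  by_cases hp3 : p = 3
  · have ha0 : a ≠ 0 := by rintro rfl; exact h6a (dvd_zero 6)
    omega
  have hpd : ¬ 3 ∣ p := fun h => hp3 ((Nat.prime_dvd_prime_iff_eq Nat.prime_three hp).mp h).symm
  have hqd : ¬ 3 ∣ q := fun h => hq3 ((Nat.prime_dvd_prime_iff_eq Nat.prime_three hq).mp h).symm
  exfalso
  have hpm : p % 3 = 1 ∨ p % 3 = 2 := by omega
  have hqm : q % 3 = 1 ∨ q % 3 = 2 := by omega
  rcases hpm with h1 | h1 <;> rcases hqm with h2 | h2 <;> omega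

/-- If `a` and `b` are distinct nonnegative even integers, neither
divisible by `6`, and both `(a+b)/2` and `|a-b|/2` are odd primes (i.e. `a` and `b` are
adjacent in `𝒢_∞`), then `|a - b| = 6`. -/
theorem stmt_15 (a b : ℕ) (ha : Even a) (hb : Even b) (hab : a ≠ b)
    (h6a : ¬ 6 ∣ a) (h6b : ¬ 6 ∣ b)
    (hsum : ((a + b) / 2).Prime) (hsum' : Odd ((a + b) / 2))
    (hdiff : ((max a b - min a b) / 2).Prime) (hdiff' : Odd ((max a b - min a b) / 2)) :
    max a b - min a b = 6 := by
  rcases lt_or_gt_of_ne hab with h | h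
  · rw [max_eq_right h.le, min_eq_left h.le] at *
    exact stmt_15_aux a b ha hb h h6a h6b hsum hsum' hdiff hdiff'
  · rw [max_eq_left h.le, min_eq_right h.le] at *
    rw [add_comm] at hsum hsum'
    exact stmt_15_aux b a hb ha h h6b h6a hsum hsum' hdiff hdiff'
end

section
/- Let X and Y be disjoint finite sets of nonnegative even integers with |X| > 2 and |Y| > 2 such that every x ∈ X is adjacent in 𝒢_∞ to every y ∈ Y (i.e., a complete bipartite graph K_{|X|,|Y|} sits inside 𝒢_∞). Then either X ⊆ 6ℕ₀ and Y ∩ 6ℕ₀ = ∅, or Y ⊆ 6ℕ₀ and X ∩ 6ℕ₀ = ∅, where 6ℕ₀ denotes the set of nonnegative multiples of 6. -/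
/-!
Sort both sides by divisibility by 3. If adjacent even `x, y` are both multiples of 3, or both
non-multiples, then one of the primes `(x + y) / 2`, `|x - y| / 2` is divisible by 3, hence
equals 3. So two adjacent multiples of 3 satisfy `x + y = 6`, and two adjacent non-multiples
satisfy `x + y = 6` or `|x - y| = 6`. Consequently no multiple of 3 on one side is adjacent to
two on the other, no non-multiple has three non-multiple neighbours, and no two non-multiples
share two non-multiple neighbours; with at least three vertices per side, counting leaves only
the two configurations of the statement.
-/

/-- Adjacency in the infinite Goldbach graph `𝒢_∞` on the nonnegative even integers:
distinct `u, v` are adjacent iff both `(u+v)/2` and `|u-v|/2` are odd primes. -/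
def adjInf (u v : ℕ) : Prop :=
  u ≠ v ∧ ((u + v) / 2).Prime ∧ Odd ((u + v) / 2) ∧
    ((max u v - min u v) / 2).Prime ∧ Odd ((max u v - min u v) / 2)

open Finset

namespace GoldbachGraph

theorem adjInf_comm {x y : ℕ} : adjInf x y ↔ adjInf y x := by
  unfold adjInf
  rw [ne_comm, add_comm, max_comm, min_comm]

theorem eq_three_of_prime_of_three_dvd {p : ℕ} (hp : p.Prime) (h3 : 3 ∣ p) : p = 3 :=
  ((Nat.prime_dvd_prime_iff_eq Nat.prime_three hp).1 h3).symm

theorem add_eq_six_of_adjInf_of_three_dvd {x y : ℕ} (h : adjInf x y) (hx : Even x)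
    (hy : Even y) (h3x : 3 ∣ x) (h3y : 3 ∣ y) : x + y = 6 := by
  obtain ⟨-, hp, -, -, -⟩ := h
  obtain ⟨a, rfl⟩ := hx
  obtain ⟨b, rfl⟩ := hy
  have := eq_three_of_prime_of_three_dvd hp (by omega)
  omega

theorem add_eq_six_or_dist_eq_six_of_adjInf {x y : ℕ} (h : adjInf x y) (hx : Even x)
    (hy : Even y) (h3x : ¬3 ∣ x) (h3y : ¬3 ∣ y) : x + y = 6 ∨ y = x + 6 ∨ x = y + 6 := by
  obtain ⟨-, hp, -, hq, -⟩ := h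
  -- one truncated difference vanishes; this form of `|x - y|` is linear, unlike `max - min`
  have hdist : max x y - min x y = x - y + (y - x) := by
    rcases le_total x y with hle | hle <;> simp [hle, Nat.sub_eq_zero_of_le]
  generalize max x y - min x y = d at hq hdist
  obtain ⟨a, rfl⟩ := hx
  obtain ⟨b, rfl⟩ := hy
  have key : 3 ∣ (a + a + (b + b)) / 2 ∨ 3 ∣ d / 2 := by
    rcases (by omega : a % 3 = 1 ∨ a % 3 = 2) with ha | ha <;>
      rcases (by omega : b % 3 = 1 ∨ b % 3 = 2) with hb | hb <;> omega
  rcases key with h3 | h3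
  · have := eq_three_of_prime_of_three_dvd hp h3
    omega
  · have := eq_three_of_prime_of_three_dvd hq h3
    omega

structure IsCompleteBipartite (X Y : Finset ℕ) : Prop where
  even_left : ∀ x ∈ X, Even x
  even_right : ∀ y ∈ Y, Even y
  adj : ∀ x ∈ X, ∀ y ∈ Y, adjInf x y

namespace IsCompleteBipartite

variable {X Y : Finset ℕ} (hXY : IsCompleteBipartite X Y)
include hXY

theorem symm : IsCompleteBipartite Y X :=
  ⟨hXY.even_right, hXY.even_left, fun y hy x hx => adjInf_comm.1 (hXY.adj x hx y hy)⟩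

theorem add_eq_six {x y : ℕ} (hx : x ∈ {x ∈ X | 3 ∣ x}) (hy : y ∈ {y ∈ Y | 3 ∣ y}) :
    x + y = 6 := by
  rw [mem_filter] at hx hy
  exact add_eq_six_of_adjInf_of_three_dvd (hXY.adj x hx.1 y hy.1) (hXY.even_left x hx.1)
    (hXY.even_right y hy.1) hx.2 hy.2

theorem add_eq_six_or_dist_eq_six {x y : ℕ} (hx : x ∈ {x ∈ X | ¬3 ∣ x})
    (hy : y ∈ {y ∈ Y | ¬3 ∣ y}) : x + y = 6 ∨ y = x + 6 ∨ x = y + 6 := by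
  rw [mem_filter] at hx hy
  exact add_eq_six_or_dist_eq_six_of_adjInf (hXY.adj x hx.1 y hy.1) (hXY.even_left x hx.1)
    (hXY.even_right y hy.1) hx.2 hy.2

theorem card_filter_three_dvd_le_one {y : ℕ} (hy : y ∈ {y ∈ Y | 3 ∣ y}) :
    #{x ∈ X | 3 ∣ x} ≤ 1 :=
  card_le_one.2 fun a ha b hb => by
    have := hXY.add_eq_six ha hy
    have := hXY.add_eq_six hb hy
    omega

theorem card_filter_not_three_dvd_le_two {y : ℕ} (hy : y ∈ {y ∈ Y | ¬3 ∣ y}) :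
    #{x ∈ X | ¬3 ∣ x} ≤ 2 := by
  by_contra! hcard
  obtain ⟨a, ha, b, hb, c, hc, hab, hac, hbc⟩ := two_lt_card.1 hcard
  have := hXY.add_eq_six_or_dist_eq_six ha hy
  have := hXY.add_eq_six_or_dist_eq_six hb hy
  have := hXY.add_eq_six_or_dist_eq_six hc hy
  omega

theorem card_filter_not_three_dvd_le_one (hYcard : 1 < #{y ∈ Y | ¬3 ∣ y}) :
    #{x ∈ X | ¬3 ∣ x} ≤ 1 := by
  obtain ⟨c, hc, d, hd, hcd⟩ := one_lt_card.1 hYcard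
  refine card_le_one.2 fun a ha b hb => ?_
  have := hXY.add_eq_six_or_dist_eq_six ha hc
  have := hXY.add_eq_six_or_dist_eq_six ha hd
  have := hXY.add_eq_six_or_dist_eq_six hb hc
  have := hXY.add_eq_six_or_dist_eq_six hb hd
  omega

theorem forall_three_dvd_or_forall_three_dvd (hXc : 2 < #X) (hYc : 2 < #Y) :
    (∀ x ∈ X, 3 ∣ x) ∨ (∀ y ∈ Y, 3 ∣ y) := by
  by_contra! ⟨⟨x, hxX, h3x⟩, ⟨y, hyY, h3y⟩⟩
  have := card_filter_add_card_filter_not (s := X) (3 ∣ ·)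
  have := card_filter_add_card_filter_not (s := Y) (3 ∣ ·)
  have := hXY.card_filter_not_three_dvd_le_two (mem_filter.2 ⟨hyY, h3y⟩)
  have := hXY.symm.card_filter_not_three_dvd_le_two (mem_filter.2 ⟨hxX, h3x⟩)
  obtain ⟨x₀, hx₀⟩ : {x ∈ X | 3 ∣ x}.Nonempty := card_pos.1 (by omega)
  obtain ⟨y₀, hy₀⟩ : {y ∈ Y | 3 ∣ y}.Nonempty := card_pos.1 (by omega)
  have := hXY.card_filter_three_dvd_le_one hy₀
  have := hXY.symm.card_filter_three_dvd_le_one hx₀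
  have := hXY.card_filter_not_three_dvd_le_one (by omega)
  omega

theorem forall_six_dvd_of_forall_three_dvd (hXc : 1 < #X) (h3X : ∀ x ∈ X, 3 ∣ x) :
    (∀ x ∈ X, 6 ∣ x) ∧ (∀ y ∈ Y, ¬6 ∣ y) := by
  refine ⟨fun x hx => Nat.Coprime.mul_dvd_of_dvd_of_dvd (by norm_num)
    (hXY.even_left x hx).two_dvd (h3X x hx), fun y hy h6y => ?_⟩
  have := hXY.card_filter_three_dvd_le_one (mem_filter.2 ⟨hy, dvd_trans (by norm_num) h6y⟩)
  rw [filter_true_of_mem h3X] at this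
  omega

end IsCompleteBipartite

end GoldbachGraph

open GoldbachGraph in
theorem stmt_17_general (X Y : Finset ℕ)
    (hX : ∀ x ∈ X, Even x) (hY : ∀ y ∈ Y, Even y)
    (hXc : 2 < X.card) (hYc : 2 < Y.card)
    (hadj : ∀ x ∈ X, ∀ y ∈ Y, adjInf x y) :
    ((∀ x ∈ X, 6 ∣ x) ∧ (∀ y ∈ Y, ¬ 6 ∣ y)) ∨
    ((∀ y ∈ Y, 6 ∣ y) ∧ (∀ x ∈ X, ¬ 6 ∣ x)) := by
  have hXY : IsCompleteBipartite X Y := ⟨hX, hY, hadj⟩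
  rcases hXY.forall_three_dvd_or_forall_three_dvd hXc hYc with h3X | h3Y
  · exact .inl (hXY.forall_six_dvd_of_forall_three_dvd (by omega) h3X)
  · exact .inr (hXY.symm.forall_six_dvd_of_forall_three_dvd (by omega) h3Y)

/-- If `X, Y` are disjoint finite sets of nonnegative even integers with
`|X| > 2` and `|Y| > 2` such that every `x ∈ X` is adjacent in `𝒢_∞` to every `y ∈ Y`,
then either `X ⊆ 6ℕ₀` and `Y ∩ 6ℕ₀ = ∅`, or `Y ⊆ 6ℕ₀` and `X ∩ 6ℕ₀ = ∅`. -/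
theorem stmt_17 (X Y : Finset ℕ) (hdisj : Disjoint X Y)
    (hX : ∀ x ∈ X, Even x) (hY : ∀ y ∈ Y, Even y)
    (hXc : 2 < X.card) (hYc : 2 < Y.card)
    (hadj : ∀ x ∈ X, ∀ y ∈ Y, adjInf x y) :
    ((∀ x ∈ X, 6 ∣ x) ∧ (∀ y ∈ Y, ¬ 6 ∣ y)) ∨
    ((∀ y ∈ Y, 6 ∣ y) ∧ (∀ x ∈ X, ¬ 6 ∣ x)) :=
  stmt_17_general X Y hX hY hXc hYc hadj
end

section
/- Let X and Y be disjoint finite sets of nonnegative even integers with |X| = 2 and |Y| > 3 such that every x ∈ X is adjacent in 𝒢_∞ to every y ∈ Y (i.e., a complete bipartite graph K_{2,|Y|} sits inside 𝒢_∞). Then either X ⊆ 6ℕ₀ and Y ∩ 6ℕ₀ = ∅, or X ∩ 6ℕ₀ = ∅ and |Y \ 6ℕ₀| ≤ 1, where 6ℕ₀ denotes the set of nonnegative multiples of 6. -/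
lemma adj_core (x y : ℕ) (hxy : x ≤ y) (hne : x ≠ y) (hx : Even x) (hy : Even y)
    (hp1 : ((x + y) / 2).Prime) (hp2 : ((y - x) / 2).Prime) :
    (6 ∣ x → 6 ∣ y → (x = 0 ∧ y = 6) ∨ (x = 6 ∧ y = 0)) ∧
      (¬ 6 ∣ x → ¬ 6 ∣ y → y = x + 6 ∨ x = y + 6 ∨ x + y = 6) := by
  obtain ⟨a, ha⟩ := hx
  obtain ⟨b, hb⟩ := hy
  have hs3 : 3 ∣ (x + y) / 2 → (x + y) / 2 = 3 := fun h3 =>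
    ((hp1.eq_one_or_self_of_dvd 3 h3).resolve_left (by norm_num)).symm
  have hd3 : 3 ∣ (y - x) / 2 → (y - x) / 2 = 3 := fun h3 =>
    ((hp2.eq_one_or_self_of_dvd 3 h3).resolve_left (by norm_num)).symm
  have hA : a % 3 = 0 ∨ a % 3 = 1 ∨ a % 3 = 2 := by omega
  have hB : b % 3 = 0 ∨ b % 3 = 1 ∨ b % 3 = 2 := by omega
  rcases em (3 ∣ (x + y) / 2) with c1 | c1
  · have e1 := hs3 c1
    rcases em (3 ∣ (y - x) / 2) with c2 | c2
    · have e2 := hd3 c2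
      rcases hA with hA|hA|hA <;> rcases hB with hB|hB|hB <;> omega
    · rcases hA with hA|hA|hA <;> rcases hB with hB|hB|hB <;> omega
  · rcases em (3 ∣ (y - x) / 2) with c2 | c2
    · have e2 := hd3 c2
      rcases hA with hA|hA|hA <;> rcases hB with hB|hB|hB <;> omega
    · rcases hA with hA|hA|hA <;> rcases hB with hB|hB|hB <;> omega

lemma adj_key (x y : ℕ) (hx : Even x) (hy : Even y) (h : adjInf x y) :
    x ≠ y ∧ (6 ∣ x → 6 ∣ y → (x = 0 ∧ y = 6) ∨ (x = 6 ∧ y = 0)) ∧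
      (¬ 6 ∣ x → ¬ 6 ∣ y → y = x + 6 ∨ x = y + 6 ∨ x + y = 6) := by
  obtain ⟨hne, hp1, _, hp2, _⟩ := h
  rcases le_total x y with hxy | hxy
  · rw [max_eq_right hxy, min_eq_left hxy] at hp2
    have := adj_core x y hxy hne hx hy hp1 hp2
    exact ⟨hne, this.1, this.2⟩
  · rw [max_eq_left hxy, min_eq_right hxy] at hp2
    rw [Nat.add_comm] at hp1
    have h2 := adj_core y x hxy (Ne.symm hne) hy hx hp1 hp2
    refine ⟨hne, fun h6y h6x => ?_, fun h6y h6x => ?_⟩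
    · have := h2.1 h6x h6y; omega
    · have := h2.2 h6x h6y; omega

lemma card_three_le {a b c : ℕ} : ({a, b, c} : Finset ℕ).card ≤ 3 := by
  apply le_trans (Finset.card_insert_le _ _)
  have := Finset.card_insert_le b ({c} : Finset ℕ)
  simp at this ⊢
  omega

/-- If `X, Y` are disjoint finite sets of nonnegative even integers with
`|X| = 2` and `|Y| > 3` such that every `x ∈ X` is adjacent in `𝒢_∞` to every `y ∈ Y`,
then either `X ⊆ 6ℕ₀` and `Y ∩ 6ℕ₀ = ∅`, or `X ∩ 6ℕ₀ = ∅` and `|Y \ 6ℕ₀| ≤ 1`. -/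
theorem stmt_18 (X Y : Finset ℕ) (hdisj : Disjoint X Y)
    (hX : ∀ x ∈ X, Even x) (hY : ∀ y ∈ Y, Even y)
    (hXc : X.card = 2) (hYc : 3 < Y.card)
    (hadj : ∀ x ∈ X, ∀ y ∈ Y, adjInf x y) :
    ((∀ x ∈ X, 6 ∣ x) ∧ (∀ y ∈ Y, ¬ 6 ∣ y)) ∨
    ((∀ x ∈ X, ¬ 6 ∣ x) ∧ (Y.filter (fun y => ¬ 6 ∣ y)).card ≤ 1) := by
  obtain ⟨x1, x2, hx12, hXeq⟩ := Finset.card_eq_two.mp hXc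
  have hm1 : x1 ∈ X := by rw [hXeq]; simp
  have hm2 : x2 ∈ X := by rw [hXeq]; simp
  have K1 : ∀ y ∈ Y, x1 ≠ y ∧ (6 ∣ x1 → 6 ∣ y → (x1 = 0 ∧ y = 6) ∨ (x1 = 6 ∧ y = 0)) ∧
      (¬ 6 ∣ x1 → ¬ 6 ∣ y → y = x1 + 6 ∨ x1 = y + 6 ∨ x1 + y = 6) := fun y hy =>
    adj_key x1 y (hX _ hm1) (hY _ hy) (hadj _ hm1 _ hy)
  have K2 : ∀ y ∈ Y, x2 ≠ y ∧ (6 ∣ x2 → 6 ∣ y → (x2 = 0 ∧ y = 6) ∨ (x2 = 6 ∧ y = 0)) ∧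
      (¬ 6 ∣ x2 → ¬ 6 ∣ y → y = x2 + 6 ∨ x2 = y + 6 ∨ x2 + y = 6) := fun y hy =>
    adj_key x2 y (hX _ hm2) (hY _ hy) (hadj _ hm2 _ hy)
  -- helper for the mixed case: if 6 ∣ xa and ¬ 6 ∣ xb with both adjacent to all of Y,
  -- then Y is contained in a 3-element set, contradiction
  have mixed : ∀ xa xb : ℕ, xa ≠ xb → 6 ∣ xa → ¬ 6 ∣ xb →
      (∀ y ∈ Y, (6 ∣ xa → 6 ∣ y → (xa = 0 ∧ y = 6) ∨ (xa = 6 ∧ y = 0))) →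
      (∀ y ∈ Y, (¬ 6 ∣ xb → ¬ 6 ∣ y → y = xb + 6 ∨ xb = y + 6 ∨ xb + y = 6)) → False := by
    intro xa xb hne ha hb Ka Kb
    have hsub : Y ⊆ (if xb < 6 then ({xb + 6, 6 - xb, 6 - xa} : Finset ℕ)
        else ({xb + 6, xb - 6, 6 - xa} : Finset ℕ)) := by
      intro y hy
      have ka := Ka y hy
      have kb := Kb y hy
      rcases em (6 ∣ y) with c | c
      · have := ka ha c
        split <;> simp <;> omega
      · have := kb hb c
        split <;> simp <;> omega
    have hle := Finset.card_le_card hsub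
    have h3 : (if xb < 6 then ({xb + 6, 6 - xb, 6 - xa} : Finset ℕ)
        else ({xb + 6, xb - 6, 6 - xa} : Finset ℕ)).card ≤ 3 := by
      split <;> exact card_three_le
    omega
  rcases em (6 ∣ x1) with d1 | d1 <;> rcases em (6 ∣ x2) with d2 | d2
  · -- both divisible by 6
    left
    constructor
    · intro x hx'
      rw [hXeq] at hx'
      simp at hx'
      rcases hx' with rfl | rfl <;> assumption
    · intro y hy hy6
      have k1 := (K1 y hy).2.1 d1 hy6
      have k2 := (K2 y hy).2.1 d2 hy6
      omega
  · exact absurd (mixed x1 x2 hx12 d1 d2 (fun y hy => (K1 y hy).2.1)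
      (fun y hy => (K2 y hy).2.2)) (fun h => h)
  · exact absurd (mixed x2 x1 (Ne.symm hx12) d2 d1 (fun y hy => (K2 y hy).2.1)
      (fun y hy => (K1 y hy).2.2)) (fun h => h)
  · -- neither divisible by 6
    right
    constructor
    · intro x hx'
      rw [hXeq] at hx'
      simp at hx'
      rcases hx' with rfl | rfl <;> assumption
    · rw [Finset.card_le_one]
      intro y hy y' hy'
      simp only [Finset.mem_filter] at hy hy'
      obtain ⟨hyY, hy6⟩ := hy
      obtain ⟨hy'Y, hy'6⟩ := hy'
      have k1 := (K1 y hyY).2.2 d1 hy6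
      have k2 := (K2 y hyY).2.2 d2 hy6
      have k1' := (K1 y' hy'Y).2.2 d1 hy'6
      have k2' := (K2 y' hy'Y).2.2 d2 hy'6
      omega
end

section
/- For every positive integer n, the set S = { (2n+2)! + 2i : 1 ≤ i ≤ n+1 }, consisting of n+1 consecutive even integers, is an independent set in 𝒢_∞: for all distinct a, b ∈ S, it is not the case that both (a+b)/2 and |a−b|/2 are odd primes (indeed (a+b)/2 is never prime for distinct a, b ∈ S). -/
/-- For every positive integer `n`, the set
`S = {(2n+2)! + 2i : 1 ≤ i ≤ n+1}` of `n+1` consecutive even integers is an independent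
set in `𝒢_∞`: for distinct `a, b ∈ S` it is not the case that both `(a+b)/2` and
`|a-b|/2` are odd primes. -/
theorem stmt_19 (n : ℕ) (hn : 0 < n) :
    ∀ i j : ℕ, 1 ≤ i → i ≤ n + 1 → 1 ≤ j → j ≤ n + 1 → i ≠ j →
      ¬ (((((2 * n + 2).factorial + 2 * i) + ((2 * n + 2).factorial + 2 * j)) / 2).Prime ∧
        Odd (((((2 * n + 2).factorial + 2 * i) + ((2 * n + 2).factorial + 2 * j)) / 2)) ∧
        ((max ((2 * n + 2).factorial + 2 * i) ((2 * n + 2).factorial + 2 * j) -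
          min ((2 * n + 2).factorial + 2 * i) ((2 * n + 2).factorial + 2 * j)) / 2).Prime ∧
        Odd ((max ((2 * n + 2).factorial + 2 * i) ((2 * n + 2).factorial + 2 * j) -
          min ((2 * n + 2).factorial + 2 * i) ((2 * n + 2).factorial + 2 * j)) / 2)) := by
  intro i j hi1 hi2 hj1 hj2 hij
  rintro ⟨hp, -, -, -⟩
  have heq : (((2 * n + 2).factorial + 2 * i) + ((2 * n + 2).factorial + 2 * j)) / 2
      = (2 * n + 2).factorial + (i + j) := by omega
  rw [heq] at hp
  have hdvd : (i + j) ∣ (2 * n + 2).factorial :=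
    Nat.dvd_factorial (by omega) (by omega)
  have hdvd2 : (i + j) ∣ (2 * n + 2).factorial + (i + j) := hdvd.add (dvd_refl _)
  have hf : 0 < (2 * n + 2).factorial := Nat.factorial_pos _
  have := hp.eq_one_or_self_of_dvd _ hdvd2
  omega
end
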